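/- In the group W(K), the difference P₁₂ − P₃₁ equals Q₀′ or −Q₀′, where Q₀′ is the K-point with coordinates (5t² − 32t + 48, 10t³ − 114t² + 392t − 408). (The x-coordinate of Q₀′ gives the second weak contact conic C₃′ : x = 5t² − 32t + 48 of C₁+C₂.) -/

import Mathlib

open WeierstrassCurve.Affine (Point)

noncomputable section

/-- `K = ℂ(t)`, the field of rational functions in one variable over `ℂ`. -/
abbrev K : Type := RatFunc ℂ

/-- The variable `t` of `K = ℂ(t)`. -/
def t : K := RatFunc.X

/-- The elliptic curve `W : y² = (x - t²)(x² - 10tx + 25x - 36)`, i.e.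
`y² = x³ + (25 - 10t - t²)x² + (10t³ - 25t² - 36)x + 36t²`, over `K`. -/
def W : WeierstrassCurve.Affine K where
  a₁ := 0
  a₂ := 25 - 10 * t - t ^ 2
  a₃ := 0
  a₄ := 10 * t ^ 3 - 25 * t ^ 2 - 36
  a₆ := 36 * t ^ 2

/-- Coordinates of the point `P₁₂` coming from the line `L₁₂ : x = 5t - 6`. -/
def xP12 : K := 5 * t - 6
def yP12 : K := -(5 * (t - 2) * (t - 3))

/-- Coordinates of the point `P₂₃` coming from the line `L₂₃ : x = 8t - 12`. -/
def xP23 : K := 8 * t - 12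
def yP23 : K := -(4 * (t - 2) * (t - 6))

/-- Coordinates of the point `P₃₁` coming from the line `L₃₁ : x = 9t - 18`. -/
def xP31 : K := 9 * t - 18
def yP31 : K := -(3 * (t - 3) * (t - 6))

/-! Since `t` is transcendental over `ℂ`, the discriminant of `W`, a nonzero polynomial in `t`,
does not vanish; so `W` is elliptic and every `K`-solution of its equation is a nonsingular point.
The chord through `P₁₂` and `-P₃₁` has slope `2t - 7` and meets `W` a third time at `Q₀′`,
hence `P₁₂ - P₃₁ = -Q₀′`. -/

open Polynomial WeierstrassCurve.Affine

lemma Transcendental.aeval_ne_zero_of_eval_ne_zero {R A : Type*} [CommRing R] [CommRing A]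
    [Algebra R A] {x : A} (hx : Transcendental R x) {p : R[X]} {c : R} (hc : p.eval c ≠ 0) :
    Polynomial.aeval x p ≠ 0 := fun h ↦ hc <| by rw [transcendental_iff.mp hx p h, eval_zero]

lemma WeierstrassCurve.Affine.Point.some_add_some_of_collinear {F : Type*} [Field F]
    [DecidableEq F] {W' : WeierstrassCurve.Affine F} {x₁ x₂ x₃ y₁ y₂ y₃ ℓ : F}
    {h₁ : W'.Nonsingular x₁ y₁} {h₂ : W'.Nonsingular x₂ y₂} {h₃ : W'.Nonsingular x₃ y₃}
    (hx : x₁ ≠ x₂)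
    (hℓ : y₁ - y₂ = ℓ * (x₁ - x₂)) (hx₃ : x₃ = W'.addX x₁ x₂ ℓ)
    (hy₃ : y₃ = W'.negAddY x₁ x₂ y₁ ℓ) :
    some _ _ h₁ + some _ _ h₂ = -some _ _ h₃ := by
  have hslope : W'.slope x₁ x₂ y₁ y₂ = ℓ := by
    rw [slope_of_X_ne hx, div_eq_iff (sub_ne_zero.mpr hx), hℓ]
  rw [Point.add_of_X_ne' hx]
  subst hx₃ hy₃
  simp only [hslope]

lemma transcendental_t : Transcendental ℂ t := RatFunc.transcendental_X

/- `Δ = 16 disc(f)` for `f = (x - t²) g`, `g = x² - 10tx + 25x - 36`, and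
`disc f = disc g · g(t²)²` with `g(t²) = (t - 6)(t + 1)(t - 2)(t - 3)`. -/
lemma W_Δ : W.Δ = aeval t (16 * (100 * X ^ 2 - 500 * X + 769) *
    ((X - 6) * (X + 1) * (X - 2) * (X - 3)) ^ 2 : ℂ[X]) := by
  simp only [W, WeierstrassCurve.Δ, WeierstrassCurve.b₂, WeierstrassCurve.b₄,
    WeierstrassCurve.b₆, WeierstrassCurve.b₈, map_mul, map_add, map_sub, map_pow, map_ofNat,
    map_one, aeval_X]
  ring

instance : W.IsElliptic := by
  rw [WeierstrassCurve.isElliptic_iff, W_Δ, isUnit_iff_ne_zero]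
  exact transcendental_t.aeval_ne_zero_of_eval_ne_zero (c := 0) (by norm_num)

lemma nonsingular_P12 : W.Nonsingular xP12 yP12 :=
  equation_iff_nonsingular.mp <| by rw [equation_iff]; simp only [W, xP12, yP12]; ring

lemma nonsingular_P31 : W.Nonsingular xP31 yP31 :=
  equation_iff_nonsingular.mp <| by rw [equation_iff]; simp only [W, xP31, yP31]; ring

lemma nonsingular_Q0' : W.Nonsingular (5 * t ^ 2 - 32 * t + 48)
    (10 * t ^ 3 - 114 * t ^ 2 + 392 * t - 408) :=
  equation_iff_nonsingular.mp <| by rw [equation_iff]; simp only [W]; ring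

lemma xP12_ne_xP31 : xP12 ≠ xP31 := by
  rw [← sub_ne_zero]
  have : xP12 - xP31 = aeval t (12 - 4 * X : ℂ[X]) := by
    simp only [xP12, xP31, map_sub, map_mul, map_ofNat, aeval_X]; ring
  rw [this]
  exact transcendental_t.aeval_ne_zero_of_eval_ne_zero (c := 0) (by norm_num)

open Classical in
/-- `P₁₂ - P₃₁ = ±Q₀′` where `Q₀′ = (5t² - 32t + 48, 10t³ - 114t² + 392t - 408)`
(whose `x`-coordinate gives the second weak contact conic `C₃′`). -/
theorem P12_sub_P31_eq_Q0' :
    ∃ (h12 : W.Nonsingular xP12 yP12) (h31 : W.Nonsingular xP31 yP31)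
      (hQ0' : W.Nonsingular (5 * t ^ 2 - 32 * t + 48)
        (10 * t ^ 3 - 114 * t ^ 2 + 392 * t - 408)),
      Point.some _ _ h12 - Point.some _ _ h31 = Point.some _ _ hQ0' ∨
      Point.some _ _ h12 - Point.some _ _ h31 = -Point.some _ _ hQ0' := by
  refine ⟨nonsingular_P12, nonsingular_P31, nonsingular_Q0', Or.inr ?_⟩
  rw [sub_eq_add_neg, Point.neg_some]
  refine Point.some_add_some_of_collinear (ℓ := 2 * t - 7) xP12_ne_xP31 ?_ ?_ ?_ <;>
    simp only [W, xP12, yP12, xP31, yP31, negY, addX, negAddY] <;> ring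

end
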